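/- If Φ : ℝ^{2n} → ℝ^{2n} is a singular (non-invertible) linear map, then ‖Φ*ω₀ − ω₀‖₂ ≥ 1. -/

import Mathlib

/-!
Let `B = Φ*ω₀ − ω₀`, let `Mᵢⱼ = B(eᵢ, eⱼ)` be its matrix, and let `v` be a unit vector in `ker Φ`.
Writing `ω₀ u v = u ⬝ J₀ v`, we get `B(·, v) = −ω₀(·, v)`, so `M v = −J₀ v` is a unit vector, and
`B(v, J₀ v) = −ω₀(v, J₀ v) = |v|² = 1`. Since `v, J₀ v` are orthonormal, Bessel's inequality
applied to the rows of `M` gives `∑ᵢⱼ Mᵢⱼ² ≥ |M v|² + |M J₀ v|² ≥ 1 + ⟨v, M J₀ v⟩² = 2`, while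
`‖B‖₂² = ½ ∑ᵢⱼ Mᵢⱼ²`.
-/

/-- The standard symplectic form `ω₀` on `ℝ^{2n}`, coordinates indexed by `Fin n × Fin 2`. -/
def omega0 (n : ℕ) (u v : Fin n × Fin 2 → ℝ) : ℝ :=
  ∑ j : Fin n, (u (j, 0) * v (j, 1) - u (j, 1) * v (j, 0))

/-- The Euclidean norm of a 2-covector on `ℝ^{2n}`. -/
noncomputable def eucNorm2 (n : ℕ)
    (ω : (Fin n × Fin 2 → ℝ) → (Fin n × Fin 2 → ℝ) → ℝ) : ℝ :=
  Real.sqrt ((1 / 2) * ∑ i : Fin n × Fin 2, ∑ j : Fin n × Fin 2,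
    (ω (Pi.single i 1) (Pi.single j 1)) ^ 2)

open Matrix

section Orthonormal

variable {m : Type*} [Fintype m]

lemma sq_dotProduct_add_sq_dotProduct_le {v w : m → ℝ} (hv : v ⬝ᵥ v = 1) (hw : w ⬝ᵥ w = 1)
    (hvw : v ⬝ᵥ w = 0) (r : m → ℝ) : (r ⬝ᵥ v) ^ 2 + (r ⬝ᵥ w) ^ 2 ≤ r ⬝ᵥ r := by
  have h : 0 ≤ (r - (r ⬝ᵥ v) • v - (r ⬝ᵥ w) • w) ⬝ᵥ (r - (r ⬝ᵥ v) • v - (r ⬝ᵥ w) • w) :=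
    Finset.sum_nonneg fun i _ => mul_self_nonneg _
  simp only [sub_dotProduct, dotProduct_sub, smul_dotProduct, dotProduct_smul, smul_eq_mul,
    dotProduct_comm v r, dotProduct_comm w r, dotProduct_comm w v, hv, hw, hvw] at h
  linarith

lemma mulVec_dotProduct_self_add_sq_le_sum_sq (M : Matrix m m ℝ) {v w : m → ℝ}
    (hv : v ⬝ᵥ v = 1) (hw : w ⬝ᵥ w = 1) (hvw : v ⬝ᵥ w = 0) :
    (M *ᵥ v) ⬝ᵥ (M *ᵥ v) + (v ⬝ᵥ M *ᵥ w) ^ 2 ≤ ∑ i, ∑ j, M i j ^ 2 := by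
  have hrows : ∀ u, (M *ᵥ u) ⬝ᵥ (M *ᵥ u) = ∑ i, (M i ⬝ᵥ u) ^ 2 := fun u =>
    Finset.sum_congr rfl fun i _ => (sq _).symm
  calc (M *ᵥ v) ⬝ᵥ (M *ᵥ v) + (v ⬝ᵥ M *ᵥ w) ^ 2
      ≤ (M *ᵥ v) ⬝ᵥ (M *ᵥ v) + (M *ᵥ w) ⬝ᵥ (M *ᵥ w) := by
        -- Cauchy–Schwarz, as the special case of Bessel's inequality for `M *ᵥ w`
        have := sq_dotProduct_add_sq_dotProduct_le hv hw hvw (M *ᵥ w)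
        rw [dotProduct_comm v]
        nlinarith [sq_nonneg ((M *ᵥ w) ⬝ᵥ w)]
    _ = ∑ i, ((M i ⬝ᵥ v) ^ 2 + (M i ⬝ᵥ w) ^ 2) := by rw [hrows, hrows, Finset.sum_add_distrib]
    _ ≤ ∑ i, M i ⬝ᵥ M i :=
        Finset.sum_le_sum fun i _ => sq_dotProduct_add_sq_dotProduct_le hv hw hvw (M i)
    _ = ∑ i, ∑ j, M i j ^ 2 := by simp only [dotProduct, sq]

lemma exists_dotProduct_self_eq_one_of_not_injective {N : Type*} [AddCommGroup N] [Module ℝ N]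
    {f : (m → ℝ) →ₗ[ℝ] N} (hf : ¬ Function.Injective f) : ∃ v, f v = 0 ∧ v ⬝ᵥ v = 1 := by
  obtain ⟨v, hv, hne⟩ := Submodule.exists_mem_ne_zero_of_ne_bot (mt LinearMap.ker_eq_bot.mp hf)
  have hpos : 0 < v ⬝ᵥ v := by simpa using dotProduct_self_star_pos_iff.mpr hne
  refine ⟨(√(v ⬝ᵥ v))⁻¹ • v, by rw [map_smul, hv, smul_zero], ?_⟩
  rw [smul_dotProduct, dotProduct_smul, smul_eq_mul, smul_eq_mul, ← mul_assoc, ← sq, inv_pow,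
    Real.sq_sqrt hpos.le, inv_mul_cancel₀ hpos.ne']

end Orthonormal

section Symplectic

variable {n : ℕ}

def omegaBilin (n : ℕ) : (Fin n × Fin 2 → ℝ) →ₗ[ℝ] (Fin n × Fin 2 → ℝ) →ₗ[ℝ] ℝ :=
  LinearMap.mk₂ ℝ (omega0 n)
    (fun u u' v => by
      simp only [omega0, Pi.add_apply, ← Finset.sum_add_distrib]
      exact Finset.sum_congr rfl fun j _ => by ring)
    (fun c u v => by
      simp only [omega0, Pi.smul_apply, smul_eq_mul, Finset.mul_sum]
      exact Finset.sum_congr rfl fun j _ => by ring)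
    (fun u v v' => by
      simp only [omega0, Pi.add_apply, ← Finset.sum_add_distrib]
      exact Finset.sum_congr rfl fun j _ => by ring)
    (fun c u v => by
      simp only [omega0, Pi.smul_apply, smul_eq_mul, Finset.mul_sum]
      exact Finset.sum_congr rfl fun j _ => by ring)

lemma omegaBilin_apply (u v : Fin n × Fin 2 → ℝ) : omegaBilin n u v = omega0 n u v := rfl

def J0 (n : ℕ) (v : Fin n × Fin 2 → ℝ) : Fin n × Fin 2 → ℝ :=
  fun p => if p.2 = 0 then v (p.1, 1) else -v (p.1, 0)

lemma omega0_eq_dotProduct_J0 (u v : Fin n × Fin 2 → ℝ) : omega0 n u v = u ⬝ᵥ J0 n v := by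
  simp [omega0, dotProduct, Fintype.sum_prod_type, Fin.sum_univ_two, J0, sub_eq_add_neg]

lemma J0_J0 (v : Fin n × Fin 2 → ℝ) : J0 n (J0 n v) = -v := by
  ext ⟨j, a⟩
  fin_cases a <;> simp [J0]

lemma J0_dotProduct_J0 (v : Fin n × Fin 2 → ℝ) : J0 n v ⬝ᵥ J0 n v = v ⬝ᵥ v := by
  simp only [dotProduct, Fintype.sum_prod_type, Fin.sum_univ_two, J0, if_true, one_ne_zero,
    if_false]
  exact Finset.sum_congr rfl fun j _ => by ring

lemma dotProduct_J0_self (v : Fin n × Fin 2 → ℝ) : v ⬝ᵥ J0 n v = 0 := by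
  rw [← omega0_eq_dotProduct_J0, omega0]
  exact Finset.sum_eq_zero fun j _ => by ring

end Symplectic

/-- If `Φ : ℝ^{2n} → ℝ^{2n}` is a singular linear map, then `‖Φ*ω₀ − ω₀‖₂ ≥ 1`. -/
theorem one_le_eucNorm_pullback_sub_of_singular (n : ℕ)
    (Φ : (Fin n × Fin 2 → ℝ) →ₗ[ℝ] (Fin n × Fin 2 → ℝ))
    (hΦ : ¬ Function.Injective Φ) :
    1 ≤ eucNorm2 n (fun u v => omega0 n (Φ u) (Φ v) - omega0 n u v) := by
  obtain ⟨v, hΦv, hv⟩ := exists_dotProduct_self_eq_one_of_not_injective hΦ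
  set B := (omegaBilin n).compl₁₂ Φ Φ - omegaBilin n
  set M := LinearMap.toMatrix₂' ℝ B
  have hB : ∀ x y, B x y = x ⬝ᵥ M *ᵥ y := fun x y => by
    rw [← Matrix.toLinearMap₂'_apply', Matrix.toLinearMap₂'_toMatrix']
  have hMv : M *ᵥ v = -J0 n v := by
    ext i
    rw [← single_one_dotProduct i (M *ᵥ v), ← hB]
    simp only [B, LinearMap.sub_apply, LinearMap.compl₁₂_apply, hΦv, map_zero,
      zero_sub, omegaBilin_apply, omega0_eq_dotProduct_J0,
      single_one_dotProduct, Pi.neg_apply]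
  have hvMJv : v ⬝ᵥ M *ᵥ J0 n v = 1 := by
    rw [← hB]
    simp [B, hΦv, omegaBilin_apply, omega0_eq_dotProduct_J0, J0_J0, hv]
  have key := mulVec_dotProduct_self_add_sq_le_sum_sq M hv ((J0_dotProduct_J0 v).trans hv)
    (dotProduct_J0_self v)
  rw [hMv, neg_dotProduct, dotProduct_neg, neg_neg, J0_dotProduct_J0, hv, hvMJv] at key
  rw [eucNorm2, Real.le_sqrt' one_pos]
  simp only [M, B, LinearMap.toMatrix₂'_apply, LinearMap.sub_apply, LinearMap.compl₁₂_apply,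
    omegaBilin_apply] at key
  linarith
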